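/- arXiv:1505.01958 — 9 statements merged into one kernel-verified Lean document; each statement's English description precedes it below -/
import Mathlib

section
/- Suppose that for every complex number λ with |λ| ≥ 1 the (n+n_y)×(n+n_f) Rosenbrock block matrix [[Φ − λI, Ẽ],[C, G]] has rank n + n_f (i.e. the fault subsystem (Φ, Ẽ, C, G) has no unstable invariant zeros). Then for every complex number λ with |λ| ≥ 1 the (n+n_y)×n stacked matrix [[Φ₁ − λI],[C₂]] has rank n; that is, the pair (Φ₁, C₂) passes the PBH test for stabilizability by output injection. -/
/-!
The map `x ↦ (x, -G⁻ C x)` sends the kernel of `[[Φ₁ - λ I], [C₂]]` injectively into the kernel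
of the Rosenbrock matrix `[[Φ - λ I, Ẽ], [C, G]]`, since `Φ₁ - λ I = (Φ - λ I) - Ẽ G⁻ C` and
`C₂ = C - G G⁻ C`. So full column rank of the Rosenbrock matrix forces full column rank of the
stacked matrix.
-/

namespace Matrix

variable {R K : Type*} {l m p q : Type*}

theorem rank_eq_card_iff_forall_mulVec_eq_zero [Field K] [Fintype m] (A : Matrix q m K) :
    A.rank = Fintype.card m ↔ ∀ v, A *ᵥ v = 0 → v = 0 := by
  rw [← ker_mulVecLin_eq_bot_iff, LinearMap.ker_eq_bot, coe_mulVecLin, mulVec_injective_iff,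
    linearIndependent_iff_card_eq_finrank_span, rank_eq_finrank_span_cols, Set.finrank, eq_comm]

theorem fromBlocks_mulVec_sum_elim_eq_zero [Ring R] [Fintype m] [Fintype p] [Fintype q]
    [DecidableEq q] {A : Matrix l m R} {E : Matrix l p R} {C : Matrix q m R} {G : Matrix q p R}
    {Ginv : Matrix p q R} {x : m → R}
    (h₁ : (A - E * Ginv * C) *ᵥ x = 0) (h₂ : ((1 - G * Ginv) * C) *ᵥ x = 0) :
    fromBlocks A E C G *ᵥ Sum.elim x (-((Ginv * C) *ᵥ x)) = 0 := by
  rw [sub_mulVec, ← mulVec_mulVec, ← mulVec_mulVec, sub_eq_zero] at h₁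
  rw [← mulVec_mulVec, sub_mulVec, one_mulVec, ← mulVec_mulVec, sub_eq_zero] at h₂
  rw [fromBlocks_mulVec, Sum.elim_comp_inl, Sum.elim_comp_inr, ← mulVec_mulVec, mulVec_neg,
    mulVec_neg, ← sub_eq_add_neg, ← sub_eq_add_neg, h₁, ← h₂, sub_self, sub_self,
    Sum.elim_zero_zero]

theorem rank_fromRows_eq_card_of_rank_fromBlocks_eq [Field K] [Fintype m] [Fintype p]
    [Fintype q] [DecidableEq q] {A : Matrix l m K} {E : Matrix l p K} {C : Matrix q m K}
    {G : Matrix q p K} (Ginv : Matrix p q K)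
    (h : (fromBlocks A E C G).rank = Fintype.card m + Fintype.card p) :
    (fromRows (A - E * Ginv * C) ((1 - G * Ginv) * C)).rank = Fintype.card m := by
  rw [← Fintype.card_sum, rank_eq_card_iff_forall_mulVec_eq_zero] at h
  rw [rank_eq_card_iff_forall_mulVec_eq_zero]
  intro x hx
  rw [fromRows_mulVec, ← Sum.elim_zero_zero, Sum.elim_eq_iff] at hx
  have hlift := h _ (fromBlocks_mulVec_sum_elim_eq_zero hx.1 hx.2)
  rw [← Sum.elim_zero_zero, Sum.elim_eq_iff] at hlift
  exact hlift.1

end Matrix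

theorem stmt0_general (n nf ny : ℕ)
    (Φ : Matrix (Fin n) (Fin n) ℂ) (E : Matrix (Fin n) (Fin nf) ℂ)
    (C : Matrix (Fin ny) (Fin n) ℂ) (G : Matrix (Fin ny) (Fin nf) ℂ)
    (Ginv : Matrix (Fin nf) (Fin ny) ℂ)
    (hzeros : ∀ z : ℂ, 1 ≤ ‖z‖ →
      (Matrix.fromBlocks (Φ - z • (1 : Matrix (Fin n) (Fin n) ℂ)) E C G).rank = n + nf) :
    ∀ z : ℂ, 1 ≤ ‖z‖ →
      (Matrix.fromRows
        ((Φ - E * Ginv * C) - z • (1 : Matrix (Fin n) (Fin n) ℂ))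
        (((1 : Matrix (Fin ny) (Fin ny) ℂ) - G * Ginv) * C)).rank = n := by
  intro z hz
  have h := Matrix.rank_fromRows_eq_card_of_rank_fromBlocks_eq (A := Φ - z • 1) (E := E) (C := C)
    (G := G) Ginv (by simpa using hzeros z hz)
  rwa [sub_right_comm, Fintype.card_fin] at h

/-- **PBH stabilizability of (Φ₁, C₂).**
If the Rosenbrock matrix of the fault subsystem (Φ, Ẽ, C, G) has full column rank
n + n_f for every λ with |λ| ≥ 1 (no unstable invariant zeros), then the stacked
matrix [[Φ₁ − λI],[C₂]] has rank n for every λ with |λ| ≥ 1. -/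
theorem stmt0 (n nf ny : ℕ) (hn : 0 < n) (hnf : 0 < nf) (hny : 0 < ny)
    (Φ : Matrix (Fin n) (Fin n) ℂ) (E : Matrix (Fin n) (Fin nf) ℂ)
    (C : Matrix (Fin ny) (Fin n) ℂ) (G : Matrix (Fin ny) (Fin nf) ℂ)
    (Ginv : Matrix (Fin nf) (Fin ny) ℂ) (hG : Ginv * G = 1)
    (hzeros : ∀ z : ℂ, 1 ≤ ‖z‖ →
      (Matrix.fromBlocks (Φ - z • (1 : Matrix (Fin n) (Fin n) ℂ)) E C G).rank = n + nf) :
    ∀ z : ℂ, 1 ≤ ‖z‖ →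
      (Matrix.fromRows
        ((Φ - E * Ginv * C) - z • (1 : Matrix (Fin n) (Fin n) ℂ))
        (((1 : Matrix (Fin ny) (Fin ny) ℂ) - G * Ginv) * C)).rank = n :=
  stmt0_general n nf ny Φ E C G Ginv hzeros
end

section
/- For every complex number λ, the rank of the block matrix [[Φ₁ − λI, Ẽ],[C₂, G]] equals the rank of the block matrix [[Φ − λI, Ẽ],[C, G]]. -/
namespace Matrix

variable {l m n o R : Type*} [Fintype m] [Fintype n] [DecidableEq m] [DecidableEq n] [CommRing R]

theorem fromBlocks_mul_fromBlocks_one_zero_neg_one (A : Matrix l m R) (B : Matrix l n R)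
    (C : Matrix o m R) (D : Matrix o n R) (K : Matrix n m R) :
    fromBlocks A B C D * (fromBlocks 1 0 (-K) 1 : Matrix (m ⊕ n) (m ⊕ n) R) =
      fromBlocks (A - B * K) B (C - D * K) D := by
  rw [fromBlocks_multiply]
  simp [sub_eq_add_neg]

theorem rank_fromBlocks_sub_mul_right (A : Matrix l m R) (B : Matrix l n R)
    (C : Matrix o m R) (D : Matrix o n R) (K : Matrix n m R) :
    (fromBlocks (A - B * K) B (C - D * K) D).rank = (fromBlocks A B C D).rank := by
  rw [← fromBlocks_mul_fromBlocks_one_zero_neg_one]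
  exact rank_mul_eq_left_of_isUnit_det _ _ (by simp)

end Matrix

theorem stmt2_general (n nf ny : ℕ)
    (Φ : Matrix (Fin n) (Fin n) ℂ) (E : Matrix (Fin n) (Fin nf) ℂ)
    (C : Matrix (Fin ny) (Fin n) ℂ) (G : Matrix (Fin ny) (Fin nf) ℂ)
    (Ginv : Matrix (Fin nf) (Fin ny) ℂ) :
    ∀ z : ℂ,
      (Matrix.fromBlocks
        ((Φ - E * Ginv * C) - z • (1 : Matrix (Fin n) (Fin n) ℂ)) E
        (((1 : Matrix (Fin ny) (Fin ny) ℂ) - G * Ginv) * C) G).rank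
      =
      (Matrix.fromBlocks (Φ - z • (1 : Matrix (Fin n) (Fin n) ℂ)) E C G).rank := by
  intro z
  have hΦ : Φ - E * Ginv * C - z • 1 = (Φ - z • 1) - E * (Ginv * C) := by
    rw [Matrix.mul_assoc]; abel
  have hC : (1 - G * Ginv) * C = C - G * (Ginv * C) := by
    rw [Matrix.sub_mul, Matrix.one_mul, Matrix.mul_assoc]
  rw [hΦ, hC, Matrix.rank_fromBlocks_sub_mul_right]

/-- **Rank invariance under the block transformation.**
For every λ, rank [[Φ₁ − λI, Ẽ],[C₂, G]] = rank [[Φ − λI, Ẽ],[C, G]]. -/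
theorem stmt2 (n nf ny : ℕ) (hn : 0 < n) (hnf : 0 < nf) (hny : 0 < ny)
    (Φ : Matrix (Fin n) (Fin n) ℂ) (E : Matrix (Fin n) (Fin nf) ℂ)
    (C : Matrix (Fin ny) (Fin n) ℂ) (G : Matrix (Fin ny) (Fin nf) ℂ)
    (Ginv : Matrix (Fin nf) (Fin ny) ℂ) (hG : Ginv * G = 1) :
    ∀ z : ℂ,
      (Matrix.fromBlocks
        ((Φ - E * Ginv * C) - z • (1 : Matrix (Fin n) (Fin n) ℂ)) E
        (((1 : Matrix (Fin ny) (Fin ny) ℂ) - G * Ginv) * C) G).rank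
      =
      (Matrix.fromBlocks (Φ - z • (1 : Matrix (Fin n) (Fin n) ℂ)) E C G).rank :=
  stmt2_general n nf ny Φ E C G Ginv
end

section
/- Suppose the sequences x̃ : ℕ → ℝⁿ, f : ℕ → ℝ^{n_f}, r, e : ℕ → ℝ^{n_y} satisfy for all k the residual dynamics x̃(k+1) = Φx̃(k) + Ẽf(k) and r(k) = Cx̃(k) + Gf(k) + e(k), and the sequences x_r : ℕ → ℝⁿ, f̂ : ℕ → ℝ^{n_f} satisfy the closed-loop left inverse equations x_r(k+1) = Φ₂x_r(k) + B₂r(k) and f̂(k) = C₁x_r(k) + D₁r(k). Then the errors x̃_r(k) := x̃(k) − x_r(k) and f̃(k) := f(k) − f̂(k) satisfy for all k: x̃_r(k+1) = (Φ₁ − K_rC₂)x̃_r(k) − B₂e(k) and f̃(k) = C₁x̃_r(k) − D₁e(k). -/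
/-!
Both error equations come from two matrix identities. The closed-loop state matrix factors as
`Φ₁ - K_r C₂ = Φ - B₂ C`, so the left inverse is an observer of the residual dynamics with gain `B₂`;
and `G⁻ G = I` gives `B₂ G = Ẽ` and `D₁ G = I`, so the unknown fault `f` cancels from both errors,
leaving only the noise `e`.
-/

open Matrix

section ObserverError

variable {ι κ ν R : Type*} [Fintype ι] [Fintype κ] [Fintype ν] [Ring R]

theorem observer_state_error_eq {Φ : Matrix ι ι R} {E : Matrix ι κ R} {C : Matrix ν ι R}
    {G : Matrix ν κ R} {B : Matrix ι ν R} (hBG : B * G = E)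
    {x x' xr xr' : ι → R} {f : κ → R} {r e : ν → R}
    (hx : x' = Φ *ᵥ x + E *ᵥ f) (hr : r = C *ᵥ x + G *ᵥ f + e)
    (hxr : xr' = (Φ - B * C) *ᵥ xr + B *ᵥ r) :
    x' - xr' = (Φ - B * C) *ᵥ (x - xr) - B *ᵥ e := by
  subst hx hr hxr hBG
  simp only [mulVec_add, mulVec_sub, sub_mulVec, mulVec_mulVec]
  abel

theorem observer_output_error_eq [DecidableEq κ] {C : Matrix ν ι R} {G : Matrix ν κ R}
    {D : Matrix κ ν R} (hDG : D * G = 1) {x xr : ι → R} {f fhat : κ → R} {r e : ν → R}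
    (hr : r = C *ᵥ x + G *ᵥ f + e) (hfhat : fhat = -(D * C) *ᵥ xr + D *ᵥ r) :
    f - fhat = -(D * C) *ᵥ (x - xr) - D *ᵥ e := by
  subst hr hfhat
  simp only [mulVec_add, mulVec_sub, neg_mulVec, mulVec_mulVec, hDG, one_mulVec]
  abel

end ObserverError

section LeftInverse

variable {ι κ ν R : Type*} [Fintype κ] [Fintype ν] [DecidableEq ν] [Ring R]
  (Φ : Matrix ι ι R) (E : Matrix ι κ R) (C : Matrix ν ι R) (G : Matrix ν κ R)
  (Ginv : Matrix κ ν R) (Kr : Matrix ι ν R)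

theorem leftInverse_closedLoop_stateMatrix_eq :
    Φ - E * Ginv * C - Kr * ((1 - G * Ginv) * C) = Φ - (E * Ginv + Kr * (1 - G * Ginv)) * C := by
  simp only [Matrix.add_mul, Matrix.mul_assoc]
  abel

variable {G Ginv} in
theorem leftInverse_closedLoop_inputMatrix_mul [DecidableEq κ] (hG : Ginv * G = 1) :
    (E * Ginv + Kr * (1 - G * Ginv)) * G = E := by
  rw [Matrix.add_mul, Matrix.mul_assoc, Matrix.mul_assoc, hG, Matrix.mul_one, Matrix.sub_mul,
    Matrix.one_mul, Matrix.mul_assoc, hG, Matrix.mul_one, sub_self, Matrix.mul_zero, add_zero]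

end LeftInverse

theorem stmt5_general (n nf ny : ℕ)
    (Φ : Matrix (Fin n) (Fin n) ℝ) (E : Matrix (Fin n) (Fin nf) ℝ)
    (C : Matrix (Fin ny) (Fin n) ℝ) (G : Matrix (Fin ny) (Fin nf) ℝ)
    (Ginv : Matrix (Fin nf) (Fin ny) ℝ) (hG : Ginv * G = 1)
    (Kr : Matrix (Fin n) (Fin ny) ℝ)
    -- definitions of the closed-loop left inverse matrices
    (Φ₁ : Matrix (Fin n) (Fin n) ℝ) (hΦ₁ : Φ₁ = Φ - E * Ginv * C)
    (B₁ : Matrix (Fin n) (Fin ny) ℝ) (hB₁ : B₁ = E * Ginv)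
    (C₁ : Matrix (Fin nf) (Fin n) ℝ) (hC₁ : C₁ = -(Ginv * C))
    (D₁ : Matrix (Fin nf) (Fin ny) ℝ) (hD₁ : D₁ = Ginv)
    (C₂ : Matrix (Fin ny) (Fin n) ℝ) (hC₂ : C₂ = ((1 : Matrix (Fin ny) (Fin ny) ℝ) - G * Ginv) * C)
    (D₂ : Matrix (Fin ny) (Fin ny) ℝ) (hD₂ : D₂ = G * Ginv)
    (Φ₂ : Matrix (Fin n) (Fin n) ℝ) (hΦ₂ : Φ₂ = Φ₁ - Kr * C₂)
    (B₂ : Matrix (Fin n) (Fin ny) ℝ) (hB₂ : B₂ = B₁ + Kr * ((1 : Matrix (Fin ny) (Fin ny) ℝ) - D₂))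
    (xt : ℕ → Fin n → ℝ) (f : ℕ → Fin nf → ℝ) (r e : ℕ → Fin ny → ℝ)
    (xr : ℕ → Fin n → ℝ) (fhat : ℕ → Fin nf → ℝ)
    (hx : ∀ k, xt (k + 1) = Φ *ᵥ xt k + E *ᵥ f k)
    (hr : ∀ k, r k = C *ᵥ xt k + G *ᵥ f k + e k)
    (hxr : ∀ k, xr (k + 1) = Φ₂ *ᵥ xr k + B₂ *ᵥ r k)
    (hfhat : ∀ k, fhat k = C₁ *ᵥ xr k + D₁ *ᵥ r k) :
    ∀ k, (xt (k + 1) - xr (k + 1) = (Φ₁ - Kr * C₂) *ᵥ (xt k - xr k) - B₂ *ᵥ e k) ∧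
      (f k - fhat k = C₁ *ᵥ (xt k - xr k) - D₁ *ᵥ e k) := by
  have hΦcl : Φ₁ - Kr * C₂ = Φ - B₂ * C := by
    subst hΦ₁ hC₂ hB₂ hB₁ hD₂
    exact leftInverse_closedLoop_stateMatrix_eq Φ E C G Ginv Kr
  have hB₂G : B₂ * G = E := by
    subst hB₂ hB₁ hD₂
    exact leftInverse_closedLoop_inputMatrix_mul E Kr hG
  subst hΦ₂ hC₁ hD₁
  rw [hΦcl] at hxr ⊢
  exact fun k => ⟨observer_state_error_eq hB₂G (hx k) (hr k) (hxr k),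
    observer_output_error_eq hG (hr k) (hfhat k)⟩

/-- **Fault estimation error dynamics of the closed-loop left inverse.** -/
theorem stmt5 (n nf ny : ℕ) (hn : 0 < n) (hnf : 0 < nf) (hny : 0 < ny)
    (Φ : Matrix (Fin n) (Fin n) ℝ) (E : Matrix (Fin n) (Fin nf) ℝ)
    (C : Matrix (Fin ny) (Fin n) ℝ) (G : Matrix (Fin ny) (Fin nf) ℝ)
    (Ginv : Matrix (Fin nf) (Fin ny) ℝ) (hG : Ginv * G = 1)
    (Kr : Matrix (Fin n) (Fin ny) ℝ)
    -- definitions of the closed-loop left inverse matrices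
    (Φ₁ : Matrix (Fin n) (Fin n) ℝ) (hΦ₁ : Φ₁ = Φ - E * Ginv * C)
    (B₁ : Matrix (Fin n) (Fin ny) ℝ) (hB₁ : B₁ = E * Ginv)
    (C₁ : Matrix (Fin nf) (Fin n) ℝ) (hC₁ : C₁ = -(Ginv * C))
    (D₁ : Matrix (Fin nf) (Fin ny) ℝ) (hD₁ : D₁ = Ginv)
    (C₂ : Matrix (Fin ny) (Fin n) ℝ) (hC₂ : C₂ = ((1 : Matrix (Fin ny) (Fin ny) ℝ) - G * Ginv) * C)
    (D₂ : Matrix (Fin ny) (Fin ny) ℝ) (hD₂ : D₂ = G * Ginv)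
    (Φ₂ : Matrix (Fin n) (Fin n) ℝ) (hΦ₂ : Φ₂ = Φ₁ - Kr * C₂)
    (B₂ : Matrix (Fin n) (Fin ny) ℝ) (hB₂ : B₂ = B₁ + Kr * ((1 : Matrix (Fin ny) (Fin ny) ℝ) - D₂))
    (xt : ℕ → Fin n → ℝ) (f : ℕ → Fin nf → ℝ) (r e : ℕ → Fin ny → ℝ)
    (xr : ℕ → Fin n → ℝ) (fhat : ℕ → Fin nf → ℝ)
    (hx : ∀ k, xt (k + 1) = Φ *ᵥ xt k + E *ᵥ f k)
    (hr : ∀ k, r k = C *ᵥ xt k + G *ᵥ f k + e k)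
    (hxr : ∀ k, xr (k + 1) = Φ₂ *ᵥ xr k + B₂ *ᵥ r k)
    (hfhat : ∀ k, fhat k = C₁ *ᵥ xr k + D₁ *ᵥ r k) :
    ∀ k, (xt (k + 1) - xr (k + 1) = (Φ₁ - Kr * C₂) *ᵥ (xt k - xr k) - B₂ *ᵥ e k) ∧
      (f k - fhat k = C₁ *ᵥ (xt k - xr k) - D₁ *ᵥ e k) :=
  stmt5_general n nf ny Φ E C G Ginv hG Kr Φ₁ hΦ₁ B₁ hB₁ C₁ hC₁ D₁ hD₁ C₂ hC₂ D₂ hD₂ Φ₂ hΦ₂ B₂ hB₂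
    xt f r e xr fhat hx hr hxr hfhat
end

section
/- Suppose the sequences u : ℕ → ℝ^{n_u}, y, r : ℕ → ℝ^{n_y}, x̂, x_r : ℕ → ℝⁿ, f̂ : ℕ → ℝ^{n_f} satisfy for all k: x̂(k+1) = Φx̂(k) + B̃u(k) + Ky(k), r(k) = y(k) − Cx̂(k) − Du(k), x_r(k+1) = Φ₂x_r(k) + B₂r(k), and f̂(k) = C₁x_r(k) + D₁r(k). Then the sequence x_f(k) := x_r(k) + x̂(k) satisfies for all k: x_f(k+1) = (Φ₁ − K_rC₂)x_f(k) + (B_f − K_rD_{f,2})u(k) + (K_f + K_rG_{f,2})y(k) and f̂(k) = C₁x_f(k) + D_{f,1}u(k) + D₁y(k), where B_f = B̃ − ẼG⁻D, K_f = K + ẼG⁻, D_{f,1} = −G⁻D, D_{f,2} = (I − GG⁻)D, G_{f,2} = I − GG⁻. -/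
/-!
The cascade is again a linear system in `x_f = x_r + x̂` because the residual feedback is
exact: `Φ₂ + B₂ C = Φ`, so substituting `r = y - C x̂ - D u` into the residual filter cancels
every `x̂`-term that is not carried by `Φ₂ x_f`. The output equation is the same computation
with `C₁ = -D₁ C`.
-/

open Matrix

section Cascade

variable {R : Type*} [Ring R] {ι κ μ φ : Type*} [Fintype ι] [Fintype κ] [Fintype μ]

theorem cascade_state_eq {A A₂ : Matrix ι ι R} {B : Matrix ι μ R} {K B₂ : Matrix ι κ R}
    {C : Matrix κ ι R} (D : Matrix κ μ R) (hA : A₂ + B₂ * C = A)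
    (xr x : ι → R) (u : μ → R) (y : κ → R) :
    A₂ *ᵥ xr + B₂ *ᵥ (y - C *ᵥ x - D *ᵥ u) + (A *ᵥ x + B *ᵥ u + K *ᵥ y) =
      A₂ *ᵥ (xr + x) + (B - B₂ * D) *ᵥ u + (K + B₂) *ᵥ y := by
  subst hA
  simp only [mulVec_add, mulVec_sub, add_mulVec, sub_mulVec, ← mulVec_mulVec]
  abel

theorem cascade_output_eq {C₁ : Matrix φ ι R} {D₁ : Matrix φ κ R} {C : Matrix κ ι R}
    (D : Matrix κ μ R) (hC : C₁ = -(D₁ * C)) (xr x : ι → R) (u : μ → R) (y : κ → R) :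
    C₁ *ᵥ xr + D₁ *ᵥ (y - C *ᵥ x - D *ᵥ u) =
      C₁ *ᵥ (xr + x) + (-(D₁ * D)) *ᵥ u + D₁ *ᵥ y := by
  subst hC
  simp only [mulVec_add, mulVec_sub, neg_mulVec, ← mulVec_mulVec]
  abel

end Cascade

theorem stmt6_general (n nu nf ny : ℕ)
    (Φ : Matrix (Fin n) (Fin n) ℝ) (Bt : Matrix (Fin n) (Fin nu) ℝ)
    (E : Matrix (Fin n) (Fin nf) ℝ) (K : Matrix (Fin n) (Fin ny) ℝ)
    (C : Matrix (Fin ny) (Fin n) ℝ) (D : Matrix (Fin ny) (Fin nu) ℝ)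
    (G : Matrix (Fin ny) (Fin nf) ℝ)
    (Ginv : Matrix (Fin nf) (Fin ny) ℝ)
    (Kr : Matrix (Fin n) (Fin ny) ℝ)
    (Φ₁ : Matrix (Fin n) (Fin n) ℝ) (hΦ₁ : Φ₁ = Φ - E * Ginv * C)
    (B₁ : Matrix (Fin n) (Fin ny) ℝ) (hB₁ : B₁ = E * Ginv)
    (C₁ : Matrix (Fin nf) (Fin n) ℝ) (hC₁ : C₁ = -(Ginv * C))
    (D₁ : Matrix (Fin nf) (Fin ny) ℝ) (hD₁ : D₁ = Ginv)
    (C₂ : Matrix (Fin ny) (Fin n) ℝ) (hC₂ : C₂ = ((1 : Matrix (Fin ny) (Fin ny) ℝ) - G * Ginv) * C)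
    (D₂ : Matrix (Fin ny) (Fin ny) ℝ) (hD₂ : D₂ = G * Ginv)
    (Φ₂ : Matrix (Fin n) (Fin n) ℝ) (hΦ₂ : Φ₂ = Φ₁ - Kr * C₂)
    (B₂ : Matrix (Fin n) (Fin ny) ℝ) (hB₂ : B₂ = B₁ + Kr * ((1 : Matrix (Fin ny) (Fin ny) ℝ) - D₂))
    (Bf : Matrix (Fin n) (Fin nu) ℝ) (hBf : Bf = Bt - E * Ginv * D)
    (Kf : Matrix (Fin n) (Fin ny) ℝ) (hKf : Kf = K + E * Ginv)
    (Df1 : Matrix (Fin nf) (Fin nu) ℝ) (hDf1 : Df1 = -(Ginv * D))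
    (Df2 : Matrix (Fin ny) (Fin nu) ℝ)
    (hDf2 : Df2 = ((1 : Matrix (Fin ny) (Fin ny) ℝ) - G * Ginv) * D)
    (Gf2 : Matrix (Fin ny) (Fin ny) ℝ)
    (hGf2 : Gf2 = (1 : Matrix (Fin ny) (Fin ny) ℝ) - G * Ginv)
    (u : ℕ → Fin nu → ℝ) (y r : ℕ → Fin ny → ℝ)
    (xhat xr : ℕ → Fin n → ℝ) (fhat : ℕ → Fin nf → ℝ)
    (hxhat : ∀ k, xhat (k + 1) = Φ *ᵥ xhat k + Bt *ᵥ u k + K *ᵥ y k)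
    (hr : ∀ k, r k = y k - C *ᵥ xhat k - D *ᵥ u k)
    (hxr : ∀ k, xr (k + 1) = Φ₂ *ᵥ xr k + B₂ *ᵥ r k)
    (hfhat : ∀ k, fhat k = C₁ *ᵥ xr k + D₁ *ᵥ r k) :
    ∀ k, (xr (k + 1) + xhat (k + 1) =
        (Φ₁ - Kr * C₂) *ᵥ (xr k + xhat k) + (Bf - Kr * Df2) *ᵥ u k
          + (Kf + Kr * Gf2) *ᵥ y k) ∧
      (fhat k = C₁ *ᵥ (xr k + xhat k) + Df1 *ᵥ u k + D₁ *ᵥ y k) := by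
  subst Φ₁ B₁ C₁ D₁ C₂ D₂ Φ₂ B₂ Bf Kf Df1 Df2 Gf2
  have hΦ : Φ - E * Ginv * C - Kr * ((1 - G * Ginv) * C) + (E * Ginv + Kr * (1 - G * Ginv)) * C
      = Φ := by
    simp only [Matrix.add_mul, Matrix.mul_assoc]
    abel
  have hBu : Bt - (E * Ginv + Kr * (1 - G * Ginv)) * D
      = Bt - E * Ginv * D - Kr * ((1 - G * Ginv) * D) := by
    simp only [Matrix.add_mul, Matrix.mul_assoc]
    abel
  have hKy : K + (E * Ginv + Kr * (1 - G * Ginv)) = K + E * Ginv + Kr * (1 - G * Ginv) :=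
    (add_assoc _ _ _).symm
  intro k
  constructor
  · rw [hxr, hxhat, hr, cascade_state_eq D hΦ, hBu, hKy]
  · rw [hfhat, hr, cascade_output_eq D rfl]

/-- **Reduced-order fault estimation filter.**
Cascading the residual generator and the closed-loop left inverse, the state
x_f(k) = x_r(k) + x̂(k) satisfies the reduced filter recursion. -/
theorem stmt6 (n nu nf ny : ℕ) (hn : 0 < n) (hnu : 0 < nu) (hnf : 0 < nf) (hny : 0 < ny)
    (Φ : Matrix (Fin n) (Fin n) ℝ) (Bt : Matrix (Fin n) (Fin nu) ℝ)
    (E : Matrix (Fin n) (Fin nf) ℝ) (K : Matrix (Fin n) (Fin ny) ℝ)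
    (C : Matrix (Fin ny) (Fin n) ℝ) (D : Matrix (Fin ny) (Fin nu) ℝ)
    (G : Matrix (Fin ny) (Fin nf) ℝ)
    (Ginv : Matrix (Fin nf) (Fin ny) ℝ) (hG : Ginv * G = 1)
    (Kr : Matrix (Fin n) (Fin ny) ℝ)
    (Φ₁ : Matrix (Fin n) (Fin n) ℝ) (hΦ₁ : Φ₁ = Φ - E * Ginv * C)
    (B₁ : Matrix (Fin n) (Fin ny) ℝ) (hB₁ : B₁ = E * Ginv)
    (C₁ : Matrix (Fin nf) (Fin n) ℝ) (hC₁ : C₁ = -(Ginv * C))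
    (D₁ : Matrix (Fin nf) (Fin ny) ℝ) (hD₁ : D₁ = Ginv)
    (C₂ : Matrix (Fin ny) (Fin n) ℝ) (hC₂ : C₂ = ((1 : Matrix (Fin ny) (Fin ny) ℝ) - G * Ginv) * C)
    (D₂ : Matrix (Fin ny) (Fin ny) ℝ) (hD₂ : D₂ = G * Ginv)
    (Φ₂ : Matrix (Fin n) (Fin n) ℝ) (hΦ₂ : Φ₂ = Φ₁ - Kr * C₂)
    (B₂ : Matrix (Fin n) (Fin ny) ℝ) (hB₂ : B₂ = B₁ + Kr * ((1 : Matrix (Fin ny) (Fin ny) ℝ) - D₂))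
    (Bf : Matrix (Fin n) (Fin nu) ℝ) (hBf : Bf = Bt - E * Ginv * D)
    (Kf : Matrix (Fin n) (Fin ny) ℝ) (hKf : Kf = K + E * Ginv)
    (Df1 : Matrix (Fin nf) (Fin nu) ℝ) (hDf1 : Df1 = -(Ginv * D))
    (Df2 : Matrix (Fin ny) (Fin nu) ℝ)
    (hDf2 : Df2 = ((1 : Matrix (Fin ny) (Fin ny) ℝ) - G * Ginv) * D)
    (Gf2 : Matrix (Fin ny) (Fin ny) ℝ)
    (hGf2 : Gf2 = (1 : Matrix (Fin ny) (Fin ny) ℝ) - G * Ginv)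
    (u : ℕ → Fin nu → ℝ) (y r : ℕ → Fin ny → ℝ)
    (xhat xr : ℕ → Fin n → ℝ) (fhat : ℕ → Fin nf → ℝ)
    (hxhat : ∀ k, xhat (k + 1) = Φ *ᵥ xhat k + Bt *ᵥ u k + K *ᵥ y k)
    (hr : ∀ k, r k = y k - C *ᵥ xhat k - D *ᵥ u k)
    (hxr : ∀ k, xr (k + 1) = Φ₂ *ᵥ xr k + B₂ *ᵥ r k)
    (hfhat : ∀ k, fhat k = C₁ *ᵥ xr k + D₁ *ᵥ r k) :
    ∀ k, (xr (k + 1) + xhat (k + 1) =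
        (Φ₁ - Kr * C₂) *ᵥ (xr k + xhat k) + (Bf - Kr * Df2) *ᵥ u k
          + (Kf + Kr * Gf2) *ᵥ y k) ∧
      (fhat k = C₁ *ᵥ (xr k + xhat k) + Df1 *ᵥ u k + D₁ *ᵥ y k) :=
  stmt6_general n nu nf ny Φ Bt E K C D G Ginv Kr Φ₁ hΦ₁ B₁ hB₁ C₁ hC₁ D₁ hD₁ C₂ hC₂ D₂ hD₂ Φ₂ hΦ₂
    B₂ hB₂ Bf hBf Kf hKf Df1 hDf1 Df2 hDf2 Gf2 hGf2 u y r xhat xr fhat hxhat hr hxr hfhat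
end

section
/- For every L ≥ 1, the block Toeplitz matrix of the open-loop left inverse is a left inverse of the block Toeplitz matrix of the fault subsystem: T_L(Φ₁, B₁, C₁, D₁) · T_L(Φ, Ẽ, C, G) = I (the Ln_f × Ln_f identity matrix). -/
/-!
`T_L(A, B, C, D)` is the block lower-triangular Toeplitz matrix of the Markov sequence
`D, C B, C A B, C A² B, …`, and the product of two such matrices is the Toeplitz matrix of the
convolution of their sequences. Since `Φ = Φ₁ + Ẽ G⁻ C`, induction on `s` gives
`∑_{a + b = s} Φ₁^a Ẽ G⁻ h(b) = Φ^s Ẽ` for the Markov sequence `h` of `(Φ, Ẽ, C, G)`; multiplied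
by `-G⁻ C` this cancels the term `G⁻ C Φ^s Ẽ` in every off-diagonal block of the convolution, while
the diagonal block is `G⁻ G = 1`.
-/

open Matrix

/-- Block lower-triangular Toeplitz matrix `T_L(A,B,C,D)` of the Markov parameters
of the system `(A,B,C,D)`. -/
def TL {α m p : Type*} [Fintype α] [DecidableEq α] (L : ℕ)
    (A : Matrix α α ℝ) (B : Matrix α m ℝ) (C : Matrix p α ℝ) (D : Matrix p m ℝ) :
    Matrix (Fin L × p) (Fin L × m) ℝ :=
  Matrix.of fun ip jq =>
    if (ip.1 : ℕ) = (jq.1 : ℕ) then D ip.2 jq.2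
    else if (jq.1 : ℕ) < (ip.1 : ℕ) then
      (C * A ^ ((ip.1 : ℕ) - (jq.1 : ℕ) - 1) * B) ip.2 jq.2
    else 0

open Finset

section BlockToeplitz

variable {R : Type*} [Semiring R] {p r m : Type*}

def blockLowerToeplitz (L : ℕ) (h : ℕ → Matrix p m R) : Matrix (Fin L × p) (Fin L × m) R :=
  of fun ip jq => if (jq.1 : ℕ) ≤ ip.1 then h ((ip.1 : ℕ) - jq.1) ip.2 jq.2 else 0

def blockConvolution [Fintype r] (h₁ : ℕ → Matrix p r R) (h₂ : ℕ → Matrix r m R) (d : ℕ) :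
    Matrix p m R :=
  ∑ x ∈ antidiagonal d, h₁ x.1 * h₂ x.2

lemma sum_range_causal_mul_causal [Fintype r] (h₁ : ℕ → Matrix p r R) (h₂ : ℕ → Matrix r m R)
    {L i k : ℕ} (hi : i < L) :
    ∑ j ∈ range L, (if j ≤ i then h₁ (i - j) else 0) * (if k ≤ j then h₂ (j - k) else 0) =
      if k ≤ i then blockConvolution h₁ h₂ (i - k) else 0 := by
  have vanish : ∀ j, ¬(k ≤ j ∧ j ≤ i) →
      (if j ≤ i then h₁ (i - j) else 0) * (if k ≤ j then h₂ (j - k) else 0) = 0 := by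
    intro j hj
    split_ifs <;> simp_all
  split_ifs with hki
  · obtain ⟨d, rfl⟩ := Nat.exists_eq_add_of_le hki
    have hsub : Ico k (k + d + 1) ⊆ range L := fun j hj =>
      mem_range.2 (by rw [mem_Ico] at hj; omega)
    -- restrict to `k ≤ j ≤ k + d`, substitute `j = k + c`, and reflect `c ↦ d - c`
    rw [← sum_subset hsub fun j _ hj => vanish j (by simpa [Nat.lt_succ_iff] using hj),
      sum_Ico_eq_sum_range,
      blockConvolution, Nat.sum_antidiagonal_eq_sum_range_succ (fun a b => h₁ a * h₂ b),
      ← sum_range_reflect]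
    refine sum_congr (by congr 1; omega) fun c hc => ?_
    have hcd := mem_range.1 hc
    rw [if_pos (by omega), if_pos (by omega)]
    congr 2 <;> omega
  · exact sum_eq_zero fun j _ => vanish j (by omega)

lemma blockLowerToeplitz_mul [Fintype r] (L : ℕ) (h₁ : ℕ → Matrix p r R)
    (h₂ : ℕ → Matrix r m R) :
    blockLowerToeplitz L h₁ * blockLowerToeplitz L h₂ =
      blockLowerToeplitz L (blockConvolution h₁ h₂) := by
  ext ⟨i, a⟩ ⟨k, b⟩
  have hblock := sum_range_causal_mul_causal h₁ h₂ (k := k) i.isLt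
  rw [← Fin.sum_univ_eq_sum_range] at hblock
  calc _ = (∑ j : Fin L, (if (j : ℕ) ≤ i then h₁ (i - j) else 0) *
        (if (k : ℕ) ≤ j then h₂ (j - k) else 0)) a b := by
        simp only [mul_apply, Fintype.sum_prod_type, Matrix.sum_apply, blockLowerToeplitz,
          of_apply]
        refine sum_congr rfl fun j _ => sum_congr rfl fun c _ => ?_
        split_ifs <;> simp
    _ = _ := by
        rw [hblock, blockLowerToeplitz, of_apply]
        split_ifs <;> rfl

lemma blockLowerToeplitz_single_zero_one [DecidableEq p] (L : ℕ) :
    blockLowerToeplitz L (Pi.single 0 1 : ℕ → Matrix p p R) = 1 := by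
  ext ⟨i, a⟩ ⟨k, b⟩
  simp only [blockLowerToeplitz, of_apply, one_apply, Prod.mk.injEq, Fin.ext_iff]
  by_cases hik : (i : ℕ) = k
  · simp [hik, one_apply]
  · simp only [hik, false_and, if_false]
    split_ifs with hle
    · rw [Pi.single_eq_of_ne (by omega), Matrix.zero_apply]
    · rfl

def markovSeq {α : Type*} [Fintype α] [DecidableEq α] (A : Matrix α α R) (B : Matrix α m R)
    (C : Matrix p α R) (D : Matrix p m R) : ℕ → Matrix p m R
  | 0 => D
  | k + 1 => C * A ^ k * B

end BlockToeplitz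

lemma TL_eq_blockLowerToeplitz {α p m : Type*} [Fintype α] [DecidableEq α] (L : ℕ)
    (A : Matrix α α ℝ) (B : Matrix α m ℝ) (C : Matrix p α ℝ) (D : Matrix p m ℝ) :
    TL L A B C D = blockLowerToeplitz L (markovSeq A B C D) := by
  ext ⟨i, a⟩ ⟨j, b⟩
  simp only [TL, blockLowerToeplitz, of_apply]
  split_ifs with hij hlt hle
  · rw [hij, Nat.sub_self, markovSeq]
  · omega
  · obtain ⟨k, hk⟩ : ∃ k, (i : ℕ) - j = k + 1 := ⟨i - j - 1, by omega⟩
    rw [hk, markovSeq, Nat.add_sub_cancel]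
  · omega
  · omega
  · rfl

section LeftInverse

variable {R : Type*} [Ring R] {n f y : Type*} [Fintype n] [DecidableEq n] [Fintype y]
  [Fintype f] [DecidableEq f]
  (Φ : Matrix n n R) (E : Matrix n f R) (C : Matrix y n R) (G : Matrix y f R)
  (Ginv : Matrix f y R)

lemma sum_antidiagonal_pow_mul_markovSeq (hG : Ginv * G = 1) (s : ℕ) :
    ∑ x ∈ antidiagonal s, (Φ - E * Ginv * C) ^ x.1 * (E * Ginv) * markovSeq Φ E C G x.2 =
      Φ ^ s * E := by
  induction s with
  | zero => simp [markovSeq, Matrix.mul_assoc, hG]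
  | succ s ih =>
    rw [Nat.sum_antidiagonal_succ]
    simp only [pow_succ', Matrix.mul_assoc] at ih ⊢
    rw [← Matrix.mul_sum, ih, pow_zero, Matrix.one_mul, markovSeq]
    simp only [Matrix.sub_mul, Matrix.mul_assoc]
    abel

lemma blockConvolution_markovSeq_of_mul_eq_one (hG : Ginv * G = 1) :
    blockConvolution (markovSeq (Φ - E * Ginv * C) (E * Ginv) (-(Ginv * C)) Ginv)
      (markovSeq Φ E C G) = Pi.single 0 1 := by
  funext d
  cases d with
  | zero => simp [blockConvolution, markovSeq, hG]
  | succ s =>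
    have hsum := sum_antidiagonal_pow_mul_markovSeq Φ E C G Ginv hG s
    rw [blockConvolution, Nat.sum_antidiagonal_succ, Pi.single_eq_of_ne s.succ_ne_zero]
    simp only [markovSeq.eq_1, markovSeq.eq_2, Matrix.neg_mul, sum_neg_distrib,
      Matrix.mul_assoc] at hsum ⊢
    rw [← Matrix.mul_sum, ← Matrix.mul_sum, hsum, add_neg_cancel]

end LeftInverse

theorem stmt9_general (n nf ny : ℕ)
    (Φ : Matrix (Fin n) (Fin n) ℝ) (E : Matrix (Fin n) (Fin nf) ℝ)
    (C : Matrix (Fin ny) (Fin n) ℝ) (G : Matrix (Fin ny) (Fin nf) ℝ)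
    (Ginv : Matrix (Fin nf) (Fin ny) ℝ) (hG : Ginv * G = 1) :
    ∀ L : ℕ, 1 ≤ L →
      TL L (Φ - E * Ginv * C) (E * Ginv) (-(Ginv * C)) Ginv * TL L Φ E C G =
        (1 : Matrix (Fin L × Fin nf) (Fin L × Fin nf) ℝ) := by
  intro L _
  rw [TL_eq_blockLowerToeplitz, TL_eq_blockLowerToeplitz, blockLowerToeplitz_mul,
    blockConvolution_markovSeq_of_mul_eq_one Φ E C G Ginv hG, blockLowerToeplitz_single_zero_one]

/-- **The open-loop left inverse block Toeplitz matrix is a left inverse of the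
fault-subsystem block Toeplitz matrix:** `T_L(Φ₁,B₁,C₁,D₁)·T_L(Φ,Ẽ,C,G) = I`. -/
theorem stmt9 (n nf ny : ℕ) (hn : 0 < n) (hnf : 0 < nf) (hny : 0 < ny)
    (Φ : Matrix (Fin n) (Fin n) ℝ) (E : Matrix (Fin n) (Fin nf) ℝ)
    (C : Matrix (Fin ny) (Fin n) ℝ) (G : Matrix (Fin ny) (Fin nf) ℝ)
    (Ginv : Matrix (Fin nf) (Fin ny) ℝ) (hG : Ginv * G = 1) :
    ∀ L : ℕ, 1 ≤ L →
      TL L (Φ - E * Ginv * C) (E * Ginv) (-(Ginv * C)) Ginv * TL L Φ E C G =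
        (1 : Matrix (Fin L × Fin nf) (Fin L × Fin nf) ℝ) :=
  stmt9_general n nf ny Φ E C G Ginv hG
end

section
/- For every L ≥ 1 the following block Toeplitz identity holds: T_L(Φ₂, B₂, C₁, D₁) = G_L + M_L · (I − T_L^f · G_L), where G_L = T_L(Φ₁, B₁, C₁, D₁), M_L = T_L(Φ₁ − K_rC₂, K_r, C₁, 0), and T_L^f = T_L(Φ, Ẽ, C, G). -/
/-!
Lower block Toeplitz matrices are determined by their block sequences, and multiplying two of
them convolves the sequences. For the Markov parameter sequences of two realizations on a common
state space with `B C' = A' - A`, the convolution telescopes into a sum of two Markov parameter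
sequences. The relations `Ẽ C₁ = Φ₁ - Φ` and `K_r C₂ = Φ₁ - Φ₂` thus give
`T_L^f G_L = T_L(Φ₁, B₁, C₂, D₂)` and a closed form for `M_L T_L(Φ₁, B₁, C₂, D₂)`, after which
the identity is a comparison of Markov parameters.
-/

open Matrix

open Finset

section LowerBlockToeplitz

variable {R : Type*} [Ring R] {m p q : Type*} (L : ℕ)

def lowerBlockToeplitz (h : ℕ → Matrix p m R) : Matrix (Fin L × p) (Fin L × m) R :=
  of fun ip jq => if (jq.1 : ℕ) ≤ ip.1 then h (ip.1 - jq.1) ip.2 jq.2 else 0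

def convolve [Fintype m] (h : ℕ → Matrix p m R) (h' : ℕ → Matrix m q R) (k : ℕ) :
    Matrix p q R :=
  ∑ x ∈ antidiagonal k, h x.1 * h' x.2

theorem lowerBlockToeplitz_add (h h' : ℕ → Matrix p m R) :
    lowerBlockToeplitz L (h + h') = lowerBlockToeplitz L h + lowerBlockToeplitz L h' := by
  ext ip jq
  simp only [lowerBlockToeplitz, of_apply, Matrix.add_apply, Pi.add_apply]
  split_ifs <;> simp

theorem lowerBlockToeplitz_sub (h h' : ℕ → Matrix p m R) :
    lowerBlockToeplitz L (h - h') = lowerBlockToeplitz L h - lowerBlockToeplitz L h' := by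
  ext ip jq
  simp only [lowerBlockToeplitz, of_apply, Matrix.sub_apply, Pi.sub_apply]
  split_ifs <;> simp

theorem lowerBlockToeplitz_mul [Fintype m] (h : ℕ → Matrix p m R) (h' : ℕ → Matrix m q R) :
    lowerBlockToeplitz L h * lowerBlockToeplitz L h' = lowerBlockToeplitz L (convolve h h') := by
  ext ⟨i, a⟩ ⟨j, b⟩
  have hterm : ∀ k : Fin L, ∑ c, lowerBlockToeplitz L h (i, a) (k, c) *
      lowerBlockToeplitz L h' (k, c) (j, b) =
        if (j : ℕ) ≤ k ∧ (k : ℕ) ≤ i then (h (i - k) * h' (k - j)) a b else 0 := by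
    intro k
    simp only [lowerBlockToeplitz, of_apply, mul_apply]
    split_ifs <;> first | omega | simp_all
  rw [mul_apply, Fintype.sum_prod_type, sum_congr rfl (fun k _ => hterm k),
    ← sum_filter]
  simp only [lowerBlockToeplitz, of_apply, convolve, Matrix.sum_apply]
  split_ifs with hji
  · refine sum_bij' (fun k _ => ((i : ℕ) - k, (k : ℕ) - j))
      (fun x hx => ⟨j + x.2, by rw [HasAntidiagonal.mem_antidiagonal] at hx; omega⟩) ?_ ?_ ?_ ?_ ?_
    · intro k hk
      simp only [mem_filter, mem_univ, true_and] at hk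
      rw [HasAntidiagonal.mem_antidiagonal]; omega
    · intro x hx
      rw [HasAntidiagonal.mem_antidiagonal] at hx
      simp only [mem_filter, mem_univ, true_and]; omega
    · intro k hk
      simp only [mem_filter, mem_univ, true_and] at hk
      ext; simp only; omega
    · intro x hx
      rw [HasAntidiagonal.mem_antidiagonal] at hx
      ext <;> simp only <;> omega
    · intro k _
      rfl
  · exact sum_eq_zero fun k hk => by simp at hk; omega

end LowerBlockToeplitz

section MarkovParameters

variable {R : Type*} [Ring R] {α m p q : Type*} [Fintype α] [DecidableEq α]

def markovParameters (A : Matrix α α R) (B : Matrix α m R) (C : Matrix p α R)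
    (D : Matrix p m R) : ℕ → Matrix p m R
  | 0 => D
  | k + 1 => C * A ^ k * B

variable (A A' : Matrix α α R) (B : Matrix α m R) (C : Matrix p α R) (D : Matrix p m R)
  (B' : Matrix α q R) (C' : Matrix m α R) (D' : Matrix m q R)

@[simp]
theorem markovParameters_zero : markovParameters A B C D 0 = D := rfl

@[simp]
theorem markovParameters_succ (k : ℕ) : markovParameters A B C D (k + 1) = C * A ^ k * B := rfl

@[simp]
theorem markovParameters_zero_zero : markovParameters A (0 : Matrix α m R) C 0 = 0 := by
  funext k; cases k <;> simp

variable [Fintype m] {A A' B C D B' C' D'}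

theorem sum_antidiagonal_pow_mul_markovParameters (hBC : B * C' = A' - A) (k : ℕ) :
    ∑ x ∈ antidiagonal k, A ^ x.1 * B * markovParameters A' B' C' D' x.2 =
      A' ^ k * B' + A ^ k * (B * D' - B') := by
  induction k with
  | zero => simp
  | succ k ih =>
    have hA : ∑ x ∈ antidiagonal k, A ^ (x.1 + 1) * B * markovParameters A' B' C' D' x.2 =
        A * ∑ x ∈ antidiagonal k, A ^ x.1 * B * markovParameters A' B' C' D' x.2 := by
      simp only [Matrix.mul_sum, pow_succ', Matrix.mul_assoc]
    have hBC' : B * markovParameters A' B' C' D' (k + 1) = (A' - A) * A' ^ k * B' := by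
      rw [markovParameters_succ, ← hBC]; simp only [Matrix.mul_assoc]
    rw [Nat.sum_antidiagonal_succ, hA, ih, pow_zero, Matrix.one_mul, hBC']
    simp only [pow_succ', Matrix.sub_mul, Matrix.mul_add, Matrix.mul_assoc]
    abel

theorem convolve_markovParameters_of_mul_eq_sub (hBC : B * C' = A' - A) :
    convolve (markovParameters A B C D) (markovParameters A' B' C' D') =
      markovParameters A' B' (C + D * C') (D * D') + markovParameters A (B * D' - B') C 0 := by
  funext k
  cases k with
  | zero => simp [convolve]
  | succ k =>
    have hC : ∑ x ∈ antidiagonal k, markovParameters A B C D (x.1 + 1) *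
        markovParameters A' B' C' D' x.2 =
          C * ∑ x ∈ antidiagonal k, A ^ x.1 * B * markovParameters A' B' C' D' x.2 := by
      simp only [Matrix.mul_sum, markovParameters_succ, Matrix.mul_assoc]
    rw [convolve, Nat.sum_antidiagonal_succ, hC, sum_antidiagonal_pow_mul_markovParameters hBC]
    simp only [Pi.add_apply, markovParameters_zero, markovParameters_succ, Matrix.add_mul,
      Matrix.mul_add, Matrix.mul_assoc]
    abel

end MarkovParameters

theorem TL_eq_lowerBlockToeplitz {α m p : Type*} [Fintype α] [DecidableEq α] (L : ℕ)
    (A : Matrix α α ℝ) (B : Matrix α m ℝ) (C : Matrix p α ℝ) (D : Matrix p m ℝ) :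
    TL L A B C D = lowerBlockToeplitz L (markovParameters A B C D) := by
  ext ⟨i, a⟩ ⟨j, b⟩
  simp only [TL, lowerBlockToeplitz, of_apply]
  split_ifs with hij
  · rw [hij, Nat.sub_self, markovParameters_zero]
  · omega
  · rw [show (i : ℕ) - j = (i - j - 1) + 1 by omega, markovParameters_succ, Nat.add_sub_cancel]
  · omega
  · omega
  · rfl

theorem stmt10_general (n nf ny : ℕ)
    (Φ : Matrix (Fin n) (Fin n) ℝ) (E : Matrix (Fin n) (Fin nf) ℝ)
    (C : Matrix (Fin ny) (Fin n) ℝ) (G : Matrix (Fin ny) (Fin nf) ℝ)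
    (Ginv : Matrix (Fin nf) (Fin ny) ℝ)
    (Kr : Matrix (Fin n) (Fin ny) ℝ)
    (Φ₁ : Matrix (Fin n) (Fin n) ℝ) (hΦ₁ : Φ₁ = Φ - E * Ginv * C)
    (B₁ : Matrix (Fin n) (Fin ny) ℝ) (hB₁ : B₁ = E * Ginv)
    (C₁ : Matrix (Fin nf) (Fin n) ℝ) (hC₁ : C₁ = -(Ginv * C))
    (D₁ : Matrix (Fin nf) (Fin ny) ℝ) (hD₁ : D₁ = Ginv)
    (C₂ : Matrix (Fin ny) (Fin n) ℝ) (hC₂ : C₂ = ((1 : Matrix (Fin ny) (Fin ny) ℝ) - G * Ginv) * C)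
    (D₂ : Matrix (Fin ny) (Fin ny) ℝ) (hD₂ : D₂ = G * Ginv)
    (Φ₂ : Matrix (Fin n) (Fin n) ℝ) (hΦ₂ : Φ₂ = Φ₁ - Kr * C₂)
    (B₂ : Matrix (Fin n) (Fin ny) ℝ) (hB₂ : B₂ = B₁ + Kr * ((1 : Matrix (Fin ny) (Fin ny) ℝ) - D₂)) :
    ∀ L : ℕ, 1 ≤ L →
      TL L Φ₂ B₂ C₁ D₁ =
        TL L Φ₁ B₁ C₁ D₁ +
          TL L (Φ₁ - Kr * C₂) Kr C₁ 0 *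
            ((1 : Matrix (Fin L × Fin ny) (Fin L × Fin ny) ℝ)
              - TL L Φ E C G * TL L Φ₁ B₁ C₁ D₁) := by
  intro L _
  have hEC₁ : E * C₁ = Φ₁ - Φ := by
    rw [hC₁, hΦ₁, Matrix.mul_neg, Matrix.mul_assoc]; abel
  have hKC₂ : Kr * C₂ = Φ₁ - Φ₂ := by rw [hΦ₂]; abel
  have hTfGL : convolve (markovParameters Φ E C G) (markovParameters Φ₁ B₁ C₁ D₁) =
      markovParameters Φ₁ B₁ C₂ D₂ := by
    have hC : C + G * C₁ = C₂ := by
      rw [hC₂, hC₁, Matrix.mul_neg, Matrix.sub_mul, Matrix.one_mul, Matrix.mul_assoc, sub_eq_add_neg]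
    rw [convolve_markovParameters_of_mul_eq_sub hEC₁, hC, hD₁, ← hD₂, ← hB₁, sub_self,
      markovParameters_zero_zero, add_zero]
  have hMLTfGL : convolve (markovParameters Φ₂ Kr C₁ 0) (markovParameters Φ₁ B₁ C₂ D₂) =
      markovParameters Φ₁ B₁ C₁ 0 + markovParameters Φ₂ (Kr * D₂ - B₁) C₁ 0 := by
    rw [convolve_markovParameters_of_mul_eq_sub hKC₂, Matrix.zero_mul, Matrix.zero_mul, add_zero]
  rw [← hΦ₂]
  simp only [TL_eq_lowerBlockToeplitz, lowerBlockToeplitz_mul, hTfGL, Matrix.mul_sub,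
    Matrix.mul_one, hMLTfGL, ← lowerBlockToeplitz_add, ← lowerBlockToeplitz_sub]
  congr 1
  funext k
  cases k with
  | zero => simp
  | succ k =>
    simp only [Pi.add_apply, Pi.sub_apply, markovParameters_succ, hB₂, Matrix.mul_add,
      Matrix.mul_sub, Matrix.mul_one]
    abel

/-- **Decomposition of the closed-loop left inverse Toeplitz matrix:**
`T_L(Φ₂,B₂,C₁,D₁) = G_L + M_L (I − T_L^f G_L)` where `G_L = T_L(Φ₁,B₁,C₁,D₁)`,
`M_L = T_L(Φ₁ − K_r C₂, K_r, C₁, 0)`, `T_L^f = T_L(Φ,Ẽ,C,G)`. -/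
theorem stmt10 (n nf ny : ℕ) (hn : 0 < n) (hnf : 0 < nf) (hny : 0 < ny)
    (Φ : Matrix (Fin n) (Fin n) ℝ) (E : Matrix (Fin n) (Fin nf) ℝ)
    (C : Matrix (Fin ny) (Fin n) ℝ) (G : Matrix (Fin ny) (Fin nf) ℝ)
    (Ginv : Matrix (Fin nf) (Fin ny) ℝ) (hG : Ginv * G = 1)
    (Kr : Matrix (Fin n) (Fin ny) ℝ)
    (Φ₁ : Matrix (Fin n) (Fin n) ℝ) (hΦ₁ : Φ₁ = Φ - E * Ginv * C)
    (B₁ : Matrix (Fin n) (Fin ny) ℝ) (hB₁ : B₁ = E * Ginv)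
    (C₁ : Matrix (Fin nf) (Fin n) ℝ) (hC₁ : C₁ = -(Ginv * C))
    (D₁ : Matrix (Fin nf) (Fin ny) ℝ) (hD₁ : D₁ = Ginv)
    (C₂ : Matrix (Fin ny) (Fin n) ℝ) (hC₂ : C₂ = ((1 : Matrix (Fin ny) (Fin ny) ℝ) - G * Ginv) * C)
    (D₂ : Matrix (Fin ny) (Fin ny) ℝ) (hD₂ : D₂ = G * Ginv)
    (Φ₂ : Matrix (Fin n) (Fin n) ℝ) (hΦ₂ : Φ₂ = Φ₁ - Kr * C₂)
    (B₂ : Matrix (Fin n) (Fin ny) ℝ) (hB₂ : B₂ = B₁ + Kr * ((1 : Matrix (Fin ny) (Fin ny) ℝ) - D₂)) :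
    ∀ L : ℕ, 1 ≤ L →
      TL L Φ₂ B₂ C₁ D₁ =
        TL L Φ₁ B₁ C₁ D₁ +
          TL L (Φ₁ - Kr * C₂) Kr C₁ 0 *
            ((1 : Matrix (Fin L × Fin ny) (Fin L × Fin ny) ℝ)
              - TL L Φ E C G * TL L Φ₁ B₁ C₁ D₁) :=
  stmt10_general n nf ny Φ E C G Ginv Kr Φ₁ hΦ₁ B₁ hB₁ C₁ hC₁ D₁ hD₁ C₂ hC₂ D₂ hD₂ Φ₂ hΦ₂ B₂ hB₂
end

section
/- For every L ≥ 1, the block Toeplitz matrix of the closed-loop left inverse is a left inverse of the block Toeplitz matrix of the fault subsystem: T_L(Φ₂, B₂, C₁, D₁) · T_L(Φ, Ẽ, C, G) = I (the Ln_f × Ln_f identity matrix), for any choice of the feedback gain K_r. -/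
open Matrix

/-!
Both block Toeplitz matrices are built from Markov parameter sequences, and the product of two
block lower-triangular Toeplitz matrices is the block Toeplitz matrix of the convolution of their
sequences. Since `Φ = Φ₂ + B₂ C` and `Ẽ = B₂ G`, feeding the Markov parameters of `(Φ, Ẽ, C, G)`
through `(Φ₂, B₂)` reproduces `Φᵏ Ẽ`; as `C₁ = -G⁻ C`, the convolution therefore vanishes in every
positive degree, while in degree `0` it is `G⁻ G = 1`.
-/

open Finset Finset.Nat

variable {R : Type*} {α m n p : Type*}

section BlockToeplitz

variable [Semiring R]

def blockToeplitz (L : ℕ) (h : ℕ → Matrix p m R) : Matrix (Fin L × p) (Fin L × m) R :=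
  of fun ip jq => if jq.1 ≤ ip.1 then h ((ip.1 : ℕ) - jq.1) ip.2 jq.2 else 0

theorem blockToeplitz_mul [Fintype n] (L : ℕ) (g : ℕ → Matrix p n R) (h : ℕ → Matrix n m R) :
    blockToeplitz L g * blockToeplitz L h =
      blockToeplitz L fun k => ∑ x ∈ antidiagonal k, g x.1 * h x.2 := by
  ext ⟨i, a⟩ ⟨j, b⟩
  have hblock : ∀ k : Fin L,
      ∑ c : n, blockToeplitz L g (i, a) (k, c) * blockToeplitz L h (k, c) (j, b) = if j ≤ k ∧ k ≤ i then (g ((i : ℕ) - k) * h ((k : ℕ) - j)) a b else 0 := by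
    intro k
    simp only [blockToeplitz, of_apply]
    split_ifs <;> simp_all [mul_apply]
  rw [mul_apply, Fintype.sum_prod_type, Fintype.sum_congr _ _ hblock, ← sum_filter]
  simp only [blockToeplitz, of_apply, Matrix.sum_apply]
  split_ifs with hji
  · refine sum_bij' (fun k _ => ((i : ℕ) - k, (k : ℕ) - j))
      (fun x hx => (⟨j + x.2, by have := mem_antidiagonal.mp hx; omega⟩ : Fin L))
      ?_ ?_ ?_ ?_ fun _ _ => rfl
    all_goals
      intro x hx
      simp only [mem_filter, mem_univ, true_and, HasAntidiagonal.mem_antidiagonal,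
        Fin.le_iff_val_le_val, Fin.ext_iff, Prod.ext_iff] at hji hx ⊢
      omega
  · refine sum_eq_zero fun k hk => ?_
    simp only [mem_filter] at hk
    exact absurd (hk.2.1.trans hk.2.2) hji

theorem blockToeplitz_single_zero_one [DecidableEq m] (L : ℕ) :
    blockToeplitz L (Pi.single 0 1 : ℕ → Matrix m m R) = 1 := by
  ext ⟨i, a⟩ ⟨j, b⟩
  simp only [blockToeplitz, of_apply, one_apply, Prod.mk.injEq]
  by_cases hij : i = j
  · subst hij
    simp [one_apply]
  · simp only [hij, false_and, if_false]
    split_ifs with hji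
    · rw [Pi.single_eq_of_ne (by omega)]
      rfl
    · rfl

end BlockToeplitz

section MarkovParam

variable [Fintype α] [DecidableEq α]

def markovParam [Semiring R] (A : Matrix α α R) (B : Matrix α m R) (C : Matrix p α R)
    (D : Matrix p m R) : ℕ → Matrix p m R
  | 0 => D
  | k + 1 => C * A ^ k * B

@[simp]
theorem markovParam_zero [Semiring R] (A : Matrix α α R) (B : Matrix α m R) (C : Matrix p α R)
    (D : Matrix p m R) : markovParam A B C D 0 = D := rfl

@[simp]
theorem markovParam_succ [Semiring R] (A : Matrix α α R) (B : Matrix α m R) (C : Matrix p α R)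
    (D : Matrix p m R) (k : ℕ) : markovParam A B C D (k + 1) = C * A ^ k * B := rfl

theorem TL_eq_blockToeplitz (L : ℕ) (A : Matrix α α ℝ) (B : Matrix α m ℝ) (C : Matrix p α ℝ)
    (D : Matrix p m ℝ) : TL L A B C D = blockToeplitz L (markovParam A B C D) := by
  ext ⟨i, a⟩ ⟨j, b⟩
  simp only [TL, blockToeplitz, of_apply, Fin.le_iff_val_le_val]
  rcases lt_trichotomy (j : ℕ) i with hji | hji | hij
  · rw [if_neg hji.ne', if_pos hji, if_pos hji.le, show (i : ℕ) - j = (i - j - 1) + 1 by omega]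
    rfl
  · rw [if_pos hji.symm, if_pos hji.le, hji, Nat.sub_self]
    rfl
  · rw [if_neg hij.ne, if_neg hij.not_gt, if_neg hij.not_ge]

theorem sum_antidiagonal_pow_mul_markovParam [Semiring R] [Fintype n] {A A₂ : Matrix α α R}
    {B : Matrix α m R} {B₂ : Matrix α n R} {C : Matrix n α R} {D : Matrix n m R}
    (hA : A = A₂ + B₂ * C) (hB : B = B₂ * D) (k : ℕ) :
    ∑ x ∈ antidiagonal k, A₂ ^ x.1 * B₂ * markovParam A B C D x.2 = A ^ k * B := by
  induction k with
  | zero => simp [hB]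
  | succ k ih =>
    simp only [Matrix.mul_assoc] at ih
    rw [sum_antidiagonal_succ]
    simp only [markovParam_succ, pow_zero, pow_succ', Matrix.one_mul, Matrix.mul_assoc,
      ← Matrix.mul_sum, ih]
    rw [← Matrix.mul_assoc B₂, ← Matrix.add_mul, add_comm, ← hA]

theorem sum_antidiagonal_markovParam_mul_markovParam [Ring R] [Fintype n] [DecidableEq m]
    {A A₂ : Matrix α α R} {B : Matrix α m R} {B₂ : Matrix α n R} {C : Matrix n α R}
    {D : Matrix n m R} {C₂ : Matrix m α R} {D₂ : Matrix m n R}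
    (hA : A = A₂ + B₂ * C) (hB : B = B₂ * D) (hC₂ : C₂ = -(D₂ * C)) (hD : D₂ * D = 1) (k : ℕ) :
    ∑ x ∈ antidiagonal k, markovParam A₂ B₂ C₂ D₂ x.1 * markovParam A B C D x.2 =
      (Pi.single 0 1 : ℕ → Matrix m m R) k := by
  cases k with
  | zero => simpa using hD
  | succ k =>
    have h := sum_antidiagonal_pow_mul_markovParam hA hB k
    simp only [Matrix.mul_assoc] at h
    rw [sum_antidiagonal_succ]
    simp only [markovParam_zero, markovParam_succ, Matrix.mul_assoc, ← Matrix.mul_sum, h]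
    rw [hC₂, ← Matrix.mul_assoc D₂, ← Matrix.add_mul, add_neg_cancel, Matrix.zero_mul,
      Pi.single_eq_of_ne k.succ_ne_zero]

end MarkovParam

theorem stmt11_general (n nf ny : ℕ)
    (Φ : Matrix (Fin n) (Fin n) ℝ) (E : Matrix (Fin n) (Fin nf) ℝ)
    (C : Matrix (Fin ny) (Fin n) ℝ) (G : Matrix (Fin ny) (Fin nf) ℝ)
    (Ginv : Matrix (Fin nf) (Fin ny) ℝ) (hG : Ginv * G = 1)
    (Kr : Matrix (Fin n) (Fin ny) ℝ)
    (Φ₁ : Matrix (Fin n) (Fin n) ℝ) (hΦ₁ : Φ₁ = Φ - E * Ginv * C)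
    (B₁ : Matrix (Fin n) (Fin ny) ℝ) (hB₁ : B₁ = E * Ginv)
    (C₁ : Matrix (Fin nf) (Fin n) ℝ) (hC₁ : C₁ = -(Ginv * C))
    (D₁ : Matrix (Fin nf) (Fin ny) ℝ) (hD₁ : D₁ = Ginv)
    (C₂ : Matrix (Fin ny) (Fin n) ℝ) (hC₂ : C₂ = ((1 : Matrix (Fin ny) (Fin ny) ℝ) - G * Ginv) * C)
    (D₂ : Matrix (Fin ny) (Fin ny) ℝ) (hD₂ : D₂ = G * Ginv)
    (Φ₂ : Matrix (Fin n) (Fin n) ℝ) (hΦ₂ : Φ₂ = Φ₁ - Kr * C₂)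
    (B₂ : Matrix (Fin n) (Fin ny) ℝ) (hB₂ : B₂ = B₁ + Kr * ((1 : Matrix (Fin ny) (Fin ny) ℝ) - D₂)) :
    ∀ L : ℕ, 1 ≤ L →
      TL L Φ₂ B₂ C₁ D₁ * TL L Φ E C G =
        (1 : Matrix (Fin L × Fin nf) (Fin L × Fin nf) ℝ) := by
  have hΦ : Φ = Φ₂ + B₂ * C := by
    rw [hΦ₂, hΦ₁, hC₂, hB₂, hB₁, hD₂]
    simp only [Matrix.add_mul, Matrix.mul_assoc]
    abel
  have hE : E = B₂ * G := by
    rw [hB₂, hB₁, hD₂]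
    simp only [Matrix.add_mul, Matrix.sub_mul, Matrix.one_mul, Matrix.mul_assoc, hG,
      Matrix.mul_one, sub_self, Matrix.mul_zero, add_zero]
  subst hD₁
  intro L _
  rw [TL_eq_blockToeplitz, TL_eq_blockToeplitz, blockToeplitz_mul,
    funext (sum_antidiagonal_markovParam_mul_markovParam hΦ hE hC₁ hG),
    blockToeplitz_single_zero_one]

/-- **The closed-loop left inverse block Toeplitz matrix is a left inverse of the
fault-subsystem block Toeplitz matrix, for any feedback gain `K_r`:**
`T_L(Φ₂,B₂,C₁,D₁)·T_L(Φ,Ẽ,C,G) = I`. -/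
theorem stmt11 (n nf ny : ℕ) (hn : 0 < n) (hnf : 0 < nf) (hny : 0 < ny)
    (Φ : Matrix (Fin n) (Fin n) ℝ) (E : Matrix (Fin n) (Fin nf) ℝ)
    (C : Matrix (Fin ny) (Fin n) ℝ) (G : Matrix (Fin ny) (Fin nf) ℝ)
    (Ginv : Matrix (Fin nf) (Fin ny) ℝ) (hG : Ginv * G = 1)
    (Kr : Matrix (Fin n) (Fin ny) ℝ)
    (Φ₁ : Matrix (Fin n) (Fin n) ℝ) (hΦ₁ : Φ₁ = Φ - E * Ginv * C)
    (B₁ : Matrix (Fin n) (Fin ny) ℝ) (hB₁ : B₁ = E * Ginv)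
    (C₁ : Matrix (Fin nf) (Fin n) ℝ) (hC₁ : C₁ = -(Ginv * C))
    (D₁ : Matrix (Fin nf) (Fin ny) ℝ) (hD₁ : D₁ = Ginv)
    (C₂ : Matrix (Fin ny) (Fin n) ℝ) (hC₂ : C₂ = ((1 : Matrix (Fin ny) (Fin ny) ℝ) - G * Ginv) * C)
    (D₂ : Matrix (Fin ny) (Fin ny) ℝ) (hD₂ : D₂ = G * Ginv)
    (Φ₂ : Matrix (Fin n) (Fin n) ℝ) (hΦ₂ : Φ₂ = Φ₁ - Kr * C₂)
    (B₂ : Matrix (Fin n) (Fin ny) ℝ) (hB₂ : B₂ = B₁ + Kr * ((1 : Matrix (Fin ny) (Fin ny) ℝ) - D₂)) :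
    ∀ L : ℕ, 1 ≤ L →
      TL L Φ₂ B₂ C₁ D₁ * TL L Φ E C G =
        (1 : Matrix (Fin L × Fin nf) (Fin L × Fin nf) ℝ) :=
  stmt11_general n nf ny Φ E C G Ginv hG Kr Φ₁ hΦ₁ B₁ hB₁ C₁ hC₁ D₁ hD₁ C₂ hC₂ D₂ hD₂ Φ₂ hΦ₂ B₂ hB₂
end

section
/- Suppose the sequences x̃ : ℕ → ℝⁿ, f : ℕ → ℝ^{n_f}, r, e : ℕ → ℝ^{n_y} satisfy for all k the residual dynamics x̃(k+1) = Φx̃(k) + Ẽf(k) and r(k) = Cx̃(k) + Gf(k) + e(k), and x_r : ℕ → ℝⁿ, f̂ : ℕ → ℝ^{n_f} satisfy the closed-loop left inverse equations x_r(k+1) = Φ₂x_r(k) + B₂r(k) and f̂(k) = C₁x_r(k) + D₁r(k), initialized at time k₀ with x_r(k₀) = 0. Then for every i ≥ 0: f(k₀+i) − f̂(k₀+i) = C₁·Φ₂^i·x̃(k₀) − Σ_{j=0}^{i−1} C₁·Φ₂^{i−1−j}·B₂·e(k₀+j) − D₁·e(k₀+i). In particular, if e(k) = 0 for all k, then for a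 window of length L the final estimation error is f(k₀+L−1) − f̂(k₀+L−1) = C₁·Φ₂^{L−1}·x̃(k₀). -/
/-!
The state error `x̃ − x_r` of the closed-loop left inverse obeys the autonomous recursion
`δ(k+1) = Φ₂ δ(k) − B₂ e(k)`: the loop gain satisfies `Φ − Φ₂ = B₂ C`, and `B₂ G = E` because
`G⁻ G = I` makes `(I − D₂) G` vanish, so the fault drops out. Likewise `D₁ G = I` removes the fault
from the output error, `f − f̂ = C₁ δ − D₁ e`. Unrolling the recursion from `δ(k₀) = x̃(k₀)`
(variation of constants) gives the formula.
-/

open Matrix Finset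

section LinearRecurrence

variable {R : Type*} [CommRing R] {m p : Type*} [Fintype m] [Fintype p] [DecidableEq m]

theorem eq_pow_mulVec_add_sum_of_recurrence {A : Matrix m m R} {B : Matrix m p R}
    {z : ℕ → m → R} {u : ℕ → p → R} (h : ∀ k, z (k + 1) = A *ᵥ z k + B *ᵥ u k) (i : ℕ) :
    z i = (A ^ i) *ᵥ z 0 + ∑ j ∈ range i, (A ^ (i - 1 - j) * B) *ᵥ u j := by
  induction i with
  | zero => simp
  | succ i ih =>
    have hpow : ∀ j ∈ range i, A * A ^ (i - 1 - j) = A ^ (i + 1 - 1 - j) := fun j hj => by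
      rw [← pow_succ', show i - 1 - j + 1 = i + 1 - 1 - j by grind]
    rw [h, ih, mulVec_add, mulVec_sum, sum_range_succ, mulVec_mulVec, ← pow_succ']
    simp only [mulVec_mulVec, ← Matrix.mul_assoc]
    rw [sum_congr rfl fun j hj => by rw [hpow j hj]]
    simp [add_assoc]

end LinearRecurrence

section ClosedLoopLeftInverse

variable {R : Type*} [CommRing R] {n nf ny : Type*} [Fintype nf] [Fintype ny]

theorem sub_closedLoop_eq_mul [DecidableEq ny] (Φ : Matrix n n R) (E : Matrix n nf R) (C : Matrix ny n R)
    (G : Matrix ny nf R) (Ginv : Matrix nf ny R) (Kr : Matrix n ny R) :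
    Φ - (Φ - E * Ginv * C - Kr * ((1 - G * Ginv) * C)) = (E * Ginv + Kr * (1 - G * Ginv)) * C := by
  simp only [Matrix.add_mul, Matrix.mul_assoc]
  abel

theorem closedLoop_input_mul_eq [DecidableEq nf] [DecidableEq ny] (E : Matrix n nf R) (G : Matrix ny nf R) (Ginv : Matrix nf ny R)
    (Kr : Matrix n ny R) (hG : Ginv * G = 1) :
    (E * Ginv + Kr * (1 - G * Ginv)) * G = E := by
  simp [Matrix.add_mul, Matrix.sub_mul, Matrix.mul_assoc, hG]

variable [Fintype n] {Φ Φ₂ : Matrix n n R} {E : Matrix n nf R} {C : Matrix ny n R} {G : Matrix ny nf R}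
  {B₂ : Matrix n ny R} {xt xr : ℕ → n → R} {f : ℕ → nf → R} {r e : ℕ → ny → R}

theorem stateError_succ (hΦ : Φ - Φ₂ = B₂ * C) (hB : B₂ * G = E)
    (hx : ∀ k, xt (k + 1) = Φ *ᵥ xt k + E *ᵥ f k) (hr : ∀ k, r k = C *ᵥ xt k + G *ᵥ f k + e k)
    (hxr : ∀ k, xr (k + 1) = Φ₂ *ᵥ xr k + B₂ *ᵥ r k) (k : ℕ) :
    xt (k + 1) - xr (k + 1) = Φ₂ *ᵥ (xt k - xr k) + (-B₂) *ᵥ e k := by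
  rw [hx, hxr, hr, sub_eq_iff_eq_add.mp hΦ, ← hB]
  simp only [add_mulVec, mulVec_add, mulVec_sub, neg_mulVec, ← mulVec_mulVec]
  abel

theorem outputError_eq [DecidableEq nf] {C₁ : Matrix nf n R} {D₁ : Matrix nf ny R} {fhat : ℕ → nf → R}
    (hD : D₁ * G = 1) (hC : C₁ = -(D₁ * C)) (hr : ∀ k, r k = C *ᵥ xt k + G *ᵥ f k + e k)
    (hfhat : ∀ k, fhat k = C₁ *ᵥ xr k + D₁ *ᵥ r k) (k : ℕ) :
    f k - fhat k = C₁ *ᵥ (xt k - xr k) - D₁ *ᵥ e k := by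
  rw [hfhat, hr, hC]
  simp only [mulVec_add, mulVec_sub, neg_mulVec, mulVec_mulVec, hD, one_mulVec]
  abel

end ClosedLoopLeftInverse

theorem stmt15_general (n nf ny : ℕ)
    (Φ : Matrix (Fin n) (Fin n) ℝ) (E : Matrix (Fin n) (Fin nf) ℝ)
    (C : Matrix (Fin ny) (Fin n) ℝ) (G : Matrix (Fin ny) (Fin nf) ℝ)
    (Ginv : Matrix (Fin nf) (Fin ny) ℝ) (hG : Ginv * G = 1)
    (Kr : Matrix (Fin n) (Fin ny) ℝ)
    (Φ₁ : Matrix (Fin n) (Fin n) ℝ) (hΦ₁ : Φ₁ = Φ - E * Ginv * C)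
    (B₁ : Matrix (Fin n) (Fin ny) ℝ) (hB₁ : B₁ = E * Ginv)
    (C₁ : Matrix (Fin nf) (Fin n) ℝ) (hC₁ : C₁ = -(Ginv * C))
    (D₁ : Matrix (Fin nf) (Fin ny) ℝ) (hD₁ : D₁ = Ginv)
    (C₂ : Matrix (Fin ny) (Fin n) ℝ) (hC₂ : C₂ = ((1 : Matrix (Fin ny) (Fin ny) ℝ) - G * Ginv) * C)
    (D₂ : Matrix (Fin ny) (Fin ny) ℝ) (hD₂ : D₂ = G * Ginv)
    (Φ₂ : Matrix (Fin n) (Fin n) ℝ) (hΦ₂ : Φ₂ = Φ₁ - Kr * C₂)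
    (B₂ : Matrix (Fin n) (Fin ny) ℝ) (hB₂ : B₂ = B₁ + Kr * ((1 : Matrix (Fin ny) (Fin ny) ℝ) - D₂))
    (xt : ℕ → Fin n → ℝ) (f : ℕ → Fin nf → ℝ) (r e : ℕ → Fin ny → ℝ)
    (xr : ℕ → Fin n → ℝ) (fhat : ℕ → Fin nf → ℝ) (k₀ : ℕ)
    (hx : ∀ k, xt (k + 1) = Φ *ᵥ xt k + E *ᵥ f k)
    (hr : ∀ k, r k = C *ᵥ xt k + G *ᵥ f k + e k)
    (hxr : ∀ k, xr (k + 1) = Φ₂ *ᵥ xr k + B₂ *ᵥ r k)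
    (hfhat : ∀ k, fhat k = C₁ *ᵥ xr k + D₁ *ᵥ r k)
    (hinit : xr k₀ = 0) :
    (∀ i : ℕ, f (k₀ + i) - fhat (k₀ + i) =
        (C₁ * Φ₂ ^ i) *ᵥ xt k₀
          - ∑ j ∈ Finset.range i, (C₁ * Φ₂ ^ (i - 1 - j) * B₂) *ᵥ e (k₀ + j)
          - D₁ *ᵥ e (k₀ + i)) ∧
    ((∀ k, e k = 0) → ∀ L : ℕ, 1 ≤ L →
        f (k₀ + L - 1) - fhat (k₀ + L - 1) = (C₁ * Φ₂ ^ (L - 1)) *ᵥ xt k₀) := by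
  have hΦ : Φ - Φ₂ = B₂ * C := by
    subst hΦ₂ hΦ₁ hC₂ hB₂ hB₁ hD₂
    exact sub_closedLoop_eq_mul Φ E C G Ginv Kr
  have hB : B₂ * G = E := by
    subst hB₂ hB₁ hD₂
    exact closedLoop_input_mul_eq E G Ginv Kr hG
  have hδ := eq_pow_mulVec_add_sum_of_recurrence (z := fun i => xt (k₀ + i) - xr (k₀ + i))
    (u := fun i => e (k₀ + i)) fun i => stateError_succ hΦ hB hx hr hxr (k₀ + i)
  have herror : ∀ i : ℕ, f (k₀ + i) - fhat (k₀ + i) =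
      (C₁ * Φ₂ ^ i) *ᵥ xt k₀
        - ∑ j ∈ Finset.range i, (C₁ * Φ₂ ^ (i - 1 - j) * B₂) *ᵥ e (k₀ + j)
        - D₁ *ᵥ e (k₀ + i) := fun i => by
    rw [outputError_eq (hD₁ ▸ hG) (hD₁ ▸ hC₁) hr hfhat, hδ i]
    simp only [add_zero, hinit, sub_zero, Matrix.mul_neg, neg_mulVec, sum_neg_distrib,
      ← sub_eq_add_neg]
    simp only [mulVec_sub, mulVec_sum, mulVec_mulVec, Matrix.mul_assoc]
  refine ⟨herror, fun he L hL => ?_⟩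
  rw [show k₀ + L - 1 = k₀ + (L - 1) by omega, herror]
  simp [he]

/-- **Explicit fault estimation error of the closed-loop left inverse over a
window.** With `x_r(k₀) = 0`, for every `i ≥ 0`
`f(k₀+i) − f̂(k₀+i) = C₁Φ₂^i x̃(k₀) − ∑_{j<i} C₁Φ₂^{i−1−j}B₂ e(k₀+j) − D₁ e(k₀+i)`;
in particular, if `e ≡ 0`, the final error over a window of length `L` is
`C₁Φ₂^{L−1} x̃(k₀)`. -/
theorem stmt15 (n nf ny : ℕ) (hn : 0 < n) (hnf : 0 < nf) (hny : 0 < ny)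
    (Φ : Matrix (Fin n) (Fin n) ℝ) (E : Matrix (Fin n) (Fin nf) ℝ)
    (C : Matrix (Fin ny) (Fin n) ℝ) (G : Matrix (Fin ny) (Fin nf) ℝ)
    (Ginv : Matrix (Fin nf) (Fin ny) ℝ) (hG : Ginv * G = 1)
    (Kr : Matrix (Fin n) (Fin ny) ℝ)
    (Φ₁ : Matrix (Fin n) (Fin n) ℝ) (hΦ₁ : Φ₁ = Φ - E * Ginv * C)
    (B₁ : Matrix (Fin n) (Fin ny) ℝ) (hB₁ : B₁ = E * Ginv)
    (C₁ : Matrix (Fin nf) (Fin n) ℝ) (hC₁ : C₁ = -(Ginv * C))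
    (D₁ : Matrix (Fin nf) (Fin ny) ℝ) (hD₁ : D₁ = Ginv)
    (C₂ : Matrix (Fin ny) (Fin n) ℝ) (hC₂ : C₂ = ((1 : Matrix (Fin ny) (Fin ny) ℝ) - G * Ginv) * C)
    (D₂ : Matrix (Fin ny) (Fin ny) ℝ) (hD₂ : D₂ = G * Ginv)
    (Φ₂ : Matrix (Fin n) (Fin n) ℝ) (hΦ₂ : Φ₂ = Φ₁ - Kr * C₂)
    (B₂ : Matrix (Fin n) (Fin ny) ℝ) (hB₂ : B₂ = B₁ + Kr * ((1 : Matrix (Fin ny) (Fin ny) ℝ) - D₂))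
    (xt : ℕ → Fin n → ℝ) (f : ℕ → Fin nf → ℝ) (r e : ℕ → Fin ny → ℝ)
    (xr : ℕ → Fin n → ℝ) (fhat : ℕ → Fin nf → ℝ) (k₀ : ℕ)
    (hx : ∀ k, xt (k + 1) = Φ *ᵥ xt k + E *ᵥ f k)
    (hr : ∀ k, r k = C *ᵥ xt k + G *ᵥ f k + e k)
    (hxr : ∀ k, xr (k + 1) = Φ₂ *ᵥ xr k + B₂ *ᵥ r k)
    (hfhat : ∀ k, fhat k = C₁ *ᵥ xr k + D₁ *ᵥ r k)
    (hinit : xr k₀ = 0) :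
    (∀ i : ℕ, f (k₀ + i) - fhat (k₀ + i) =
        (C₁ * Φ₂ ^ i) *ᵥ xt k₀
          - ∑ j ∈ Finset.range i, (C₁ * Φ₂ ^ (i - 1 - j) * B₂) *ᵥ e (k₀ + j)
          - D₁ *ᵥ e (k₀ + i)) ∧
    ((∀ k, e k = 0) → ∀ L : ℕ, 1 ≤ L →
        f (k₀ + L - 1) - fhat (k₀ + L - 1) = (C₁ * Φ₂ ^ (L - 1)) *ᵥ xt k₀) :=
  stmt15_general n nf ny Φ E C G Ginv hG Kr Φ₁ hΦ₁ B₁ hB₁ C₁ hC₁ D₁ hD₁ C₂ hC₂ D₂ hD₂ Φ₂ hΦ₂ B₂ hB₂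
    xt f r e xr fhat k₀ hx hr hxr hfhat hinit
end

section
/- Let O be an m×n real matrix and T an m×p real matrix such that TᵀT is invertible. Set G' = (TᵀT)⁻¹Tᵀ, P = TG', and Δ = Oᵀ(I − P)O, and let Δ⁽¹⁾ be any n×n real matrix satisfying ΔΔ⁽¹⁾Δ = Δ. For any r ∈ ℝ^m, define x̂ = Δ⁽¹⁾Oᵀ(I − P)r and f̂ = G'(r − Ox̂). Then the pair (x̂, f̂) satisfies the normal equations of the least-squares problem min over (x,f) of ‖r − Ox − Tf‖₂², namely Oᵀ(Ox̂ + Tf̂) = Oᵀr and Tᵀ(Ox̂ + Tf̂) = Tᵀr; consequently (x̂, f̂) is a minimizer of ‖r − Ox − Tf‖₂² over all (x, f) ∈ ℝⁿ × ℝ^p. -/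
/-!
Orthogonality of the residual to the columns of `O` and `T` (the normal equations) gives
minimality by Pythagoras. `P` is the orthogonal projection onto the column space of `T`, so
eliminating `f` leaves the least-squares problem for `B = (I - P)O`, whose Gram matrix is `Δ = BᵀB`.
Any (1)-inverse `Δ⁽¹⁾` of a Gram matrix satisfies `ΔΔ⁽¹⁾Bᵀ = Bᵀ`: the matrix `ΔΔ⁽¹⁾ - I` kills
`BᵀB`, hence kills `Bᵀ`. This is exactly what makes `x̂ = Δ⁽¹⁾Bᵀr` solve the reduced normal equations.
-/

open Matrix

namespace Matrix

section Projection

variable {R : Type*} [CommRing R] {m p : Type*} [Fintype m] [Fintype p] [DecidableEq p]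
  (T : Matrix m p R) [Invertible (Tᵀ * T)]

theorem transpose_mul_mul_invOf_gram_mul_transpose :
    Tᵀ * (T * (⅟(Tᵀ * T) * Tᵀ)) = Tᵀ := by
  rw [← Matrix.mul_assoc, ← Matrix.mul_assoc, mul_invOf_self, Matrix.one_mul]

theorem isSymm_mul_invOf_gram_mul_transpose : (T * (⅟(Tᵀ * T) * Tᵀ)).IsSymm := by
  rw [IsSymm, invOf_eq_nonsing_inv]
  simp only [transpose_mul, transpose_nonsing_inv, transpose_transpose, Matrix.mul_assoc]

theorem isIdempotentElem_mul_invOf_gram_mul_transpose :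
    IsIdempotentElem (T * (⅟(Tᵀ * T) * Tᵀ)) := by
  rw [IsIdempotentElem, Matrix.mul_assoc, Matrix.mul_assoc,
    transpose_mul_mul_invOf_gram_mul_transpose]

end Projection

theorem gram_mul_mul_conjTranspose_of_mul_mul_gram {R : Type*} [Ring R] [PartialOrder R]
    [StarRing R] [StarOrderedRing R] [NoZeroDivisors R] {m n : Type*} [Fintype m] [Fintype n]
    [DecidableEq n] (B : Matrix m n R) {G : Matrix n n R}
    (hG : Bᴴ * B * G * (Bᴴ * B) = Bᴴ * B) :
    Bᴴ * B * G * Bᴴ = Bᴴ := by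
  have h : (Bᴴ * B * G - 1) * (Bᴴ * B) = 0 := by
    rw [Matrix.sub_mul, hG, Matrix.one_mul, sub_self]
  rwa [mul_conjTranspose_mul_self_eq_zero, Matrix.sub_mul, Matrix.one_mul, sub_eq_zero] at h

theorem dotProduct_self_le_of_dotProduct_eq_zero {R : Type*} [CommRing R] [LinearOrder R]
    [IsStrictOrderedRing R] {m : Type*} [Fintype m] {ρ w : m → R} (h : ρ ⬝ᵥ w = 0) :
    ρ ⬝ᵥ ρ ≤ (ρ + w) ⬝ᵥ (ρ + w) := by
  have hw : 0 ≤ w ⬝ᵥ w := Fintype.sum_nonneg fun i => mul_self_nonneg (w i)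
  have expand : (ρ + w) ⬝ᵥ (ρ + w) = ρ ⬝ᵥ ρ + 2 * (ρ ⬝ᵥ w) + w ⬝ᵥ w := by
    simp only [add_dotProduct, dotProduct_add, dotProduct_comm w ρ]
    ring
  rw [expand, h]
  linarith

theorem residual_dotProduct_le_of_transpose_mulVec_eq_zero {R : Type*} [CommRing R]
    [LinearOrder R] [IsStrictOrderedRing R] {m n p : Type*} [Fintype m] [Fintype n] [Fintype p]
    {O : Matrix m n R} {T : Matrix m p R} {r : m → R} {x₀ : n → R} {f₀ : p → R}
    (hO : Oᵀ *ᵥ (r - O *ᵥ x₀ - T *ᵥ f₀) = 0) (hT : Tᵀ *ᵥ (r - O *ᵥ x₀ - T *ᵥ f₀) = 0)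
    (x : n → R) (f : p → R) :
    (r - O *ᵥ x₀ - T *ᵥ f₀) ⬝ᵥ (r - O *ᵥ x₀ - T *ᵥ f₀) ≤
      (r - O *ᵥ x - T *ᵥ f) ⬝ᵥ (r - O *ᵥ x - T *ᵥ f) := by
  have hdecomp : r - O *ᵥ x - T *ᵥ f =
      (r - O *ᵥ x₀ - T *ᵥ f₀) + (O *ᵥ (x₀ - x) + T *ᵥ (f₀ - f)) := by
    rw [mulVec_sub, mulVec_sub]
    abel
  rw [hdecomp]
  apply dotProduct_self_le_of_dotProduct_eq_zero
  rw [dotProduct_add, dotProduct_mulVec, dotProduct_mulVec, ← mulVec_transpose,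
    ← mulVec_transpose, hO, hT, zero_dotProduct, zero_dotProduct, add_zero]

end Matrix

/-- **The generalized-inverse least-squares solution satisfies the normal
equations and minimizes the squared residual.**
With `G' = (TᵀT)⁻¹Tᵀ`, `P = TG'`, `Δ = Oᵀ(I − P)O`, `Δ⁽¹⁾` a (1)-inverse of `Δ`,
and, for a given `r`, `x̂ = Δ⁽¹⁾Oᵀ(I − P)r` and `f̂ = G'(r − Ox̂)`, the pair
`(x̂, f̂)` satisfies `Oᵀ(Ox̂ + Tf̂) = Oᵀr`, `Tᵀ(Ox̂ + Tf̂) = Tᵀr`, and minimizes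
`‖r − Ox − Tf‖₂²` over all `(x, f)`. -/
theorem stmt17 (m n p : ℕ)
    (O : Matrix (Fin m) (Fin n) ℝ) (T : Matrix (Fin m) (Fin p) ℝ)
    [Invertible (Tᵀ * T)]
    (G' : Matrix (Fin p) (Fin m) ℝ) (hG' : G' = ⅟(Tᵀ * T) * Tᵀ)
    (P : Matrix (Fin m) (Fin m) ℝ) (hP : P = T * G')
    (Δ : Matrix (Fin n) (Fin n) ℝ)
    (hΔ : Δ = Oᵀ * ((1 : Matrix (Fin m) (Fin m) ℝ) - P) * O)
    (Δ₁ : Matrix (Fin n) (Fin n) ℝ) (hΔ₁ : Δ * Δ₁ * Δ = Δ)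
    (r : Fin m → ℝ) (xhat : Fin n → ℝ) (fhat : Fin p → ℝ)
    (hxhat : xhat = Δ₁ *ᵥ (Oᵀ *ᵥ (((1 : Matrix (Fin m) (Fin m) ℝ) - P) *ᵥ r)))
    (hfhat : fhat = G' *ᵥ (r - O *ᵥ xhat)) :
    (Oᵀ *ᵥ (O *ᵥ xhat + T *ᵥ fhat) = Oᵀ *ᵥ r) ∧
    (Tᵀ *ᵥ (O *ᵥ xhat + T *ᵥ fhat) = Tᵀ *ᵥ r) ∧
    (∀ (x : Fin n → ℝ) (f : Fin p → ℝ),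
      (r - O *ᵥ xhat - T *ᵥ fhat) ⬝ᵥ (r - O *ᵥ xhat - T *ᵥ fhat) ≤
        (r - O *ᵥ x - T *ᵥ f) ⬝ᵥ (r - O *ᵥ x - T *ᵥ f)) := by
  have hTP : Tᵀ * P = Tᵀ := hP ▸ hG' ▸ transpose_mul_mul_invOf_gram_mul_transpose T
  have hQsymm : (1 - P).IsSymm :=
    isSymm_one.sub (hP ▸ hG' ▸ isSymm_mul_invOf_gram_mul_transpose T)
  have hQidem : IsIdempotentElem (1 - P) :=
    (hP ▸ hG' ▸ isIdempotentElem_mul_invOf_gram_mul_transpose T).one_sub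
  set Q := 1 - P
  have hBt : (Q * O)ᴴ = Oᵀ * Q := by
    rw [conjTranspose_eq_transpose_of_trivial, transpose_mul, hQsymm.eq]
  have hΔB : Δ = (Q * O)ᴴ * (Q * O) := by
    rw [hΔ, hBt, ← Matrix.mul_assoc, Matrix.mul_assoc Oᵀ Q Q, hQidem.eq]
  have hkey : Δ * Δ₁ * (Oᵀ * Q) = Oᵀ * Q := by
    rw [← hBt, hΔB]
    exact gram_mul_mul_conjTranspose_of_mul_mul_gram _ (hΔB ▸ hΔ₁)
  have hres : r - O *ᵥ xhat - T *ᵥ fhat = Q *ᵥ (r - O *ᵥ xhat) := by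
    rw [hfhat, mulVec_mulVec, ← hP, sub_mulVec, one_mulVec]
  have hO : Oᵀ *ᵥ (r - O *ᵥ xhat - T *ᵥ fhat) = 0 := by
    rw [hres, mulVec_mulVec, mulVec_sub, mulVec_mulVec, ← hΔ, hxhat, mulVec_mulVec,
      mulVec_mulVec, mulVec_mulVec, Matrix.mul_assoc (Δ * Δ₁), hkey, sub_self]
  have hT : Tᵀ *ᵥ (r - O *ᵥ xhat - T *ᵥ fhat) = 0 := by
    rw [hres, mulVec_mulVec, Matrix.mul_sub, Matrix.mul_one, hTP, sub_self, zero_mulVec]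
  refine ⟨?_, ?_, residual_dotProduct_le_of_transpose_mulVec_eq_zero hO hT⟩
  · rwa [sub_sub, mulVec_sub, sub_eq_zero, eq_comm] at hO
  · rwa [sub_sub, mulVec_sub, sub_eq_zero, eq_comm] at hT
end
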